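/- arXiv:1902.06288 — 3 statements merged into one kernel-verified Lean document; each statement's English description precedes it below -/
import Mathlib

section
/- Splitting an aggregation into local and secondary steps is idempotent-compatible: for any relation R partitioned as R = R_1 ⊎ ... ⊎ R_n, applying group-by-sum to the multiset of all (key, partial-sum) pairs produced by per-partition group-by-sums yields the same result as group-by-sum applied directly to R. -/
/-- Group-by-sum aggregation of a relation (a multiset of key-value pairs). -/
def groupBySum {K M : Type*} [DecidableEq K] [AddCommMonoid M]
    (R : Multiset (K × M)) : K → M :=
  fun k => ((R.filter (fun kv => kv.1 = k)).map Prod.snd).sum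

/-- The intermediate relation produced by a local per-partition group-by-sum:
one pair `(k, groupBySum R k)` for each key `k` occurring in `R`. -/
def localAgg {K M : Type*} [DecidableEq K] [AddCommMonoid M]
    (R : Multiset (K × M)) : Multiset (K × M) :=
  (R.map Prod.fst).toFinset.val.map (fun k => (k, groupBySum R k))

lemma groupBySum_add {K M : Type*} [DecidableEq K] [AddCommMonoid M]
    (R S : Multiset (K × M)) :
    groupBySum (R + S) = groupBySum R + groupBySum S := by
  funext k
  simp [groupBySum, Multiset.filter_add]

lemma groupBySum_localAgg {K M : Type*} [DecidableEq K] [AddCommMonoid M]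
    (R : Multiset (K × M)) : groupBySum (localAgg R) = groupBySum R := by
  funext k
  unfold groupBySum localAgg
  rw [Multiset.filter_map]
  simp only [Function.comp_def]
  rw [← Finset.filter_val, Finset.filter_eq']
  by_cases hk : k ∈ (R.map Prod.fst).toFinset
  · rw [if_pos hk]
    simp [groupBySum]
  · rw [if_neg hk]
    simp only [Multiset.mem_toFinset, Multiset.mem_map] at hk
    have h0 : Multiset.filter (fun kv => kv.1 = k) R = 0 :=
      Multiset.filter_eq_nil.mpr (fun a ha h => hk ⟨a, ha, h⟩)
    simp [h0]

/-- Splitting an aggregation is idempotent-compatible: applying group-by-sum to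
the union of the per-partition (key, partial-sum) relations yields the same
result as group-by-sum applied directly to the full partitioned relation. -/
theorem split_aggregation_correct {K M : Type*} [DecidableEq K]
    [AddCommMonoid M] (n : ℕ) (R : Fin n → Multiset (K × M)) :
    groupBySum (∑ i, localAgg (R i)) = groupBySum (∑ i, R i) := by
  induction n with
  | zero => simp
  | succ m ih =>
    rw [Fin.sum_univ_succ, Fin.sum_univ_succ, groupBySum_add, groupBySum_add,
      groupBySum_localAgg, ih fun i => R i.succ]
end

section
/- The Cartesian-product join of two relations of sizes n and m requires exactly n·m key-equality comparisons, and hence when both inputs have size n the oblivious MPC join performs n² comparisons; in contrast, if the result has size m, selecting the m matching left rows and m matching right rows from obliviously shuffled inputs via an O(N log N) oblivious indexing protocol on N = n + m elements uses O((n+m) log(n+m)) non-linear operations, which is asymptotically smaller than n² whenever m = O(n). -/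
/-- The oblivious Cartesian-product MPC join on inputs of sizes `n` and `m`
performs exactly `n·m` key-equality comparisons (hence `n²` when both inputs
have size `n`), whereas the hybrid join's oblivious-indexing cost
`O((n+m) log(n+m))` is asymptotically smaller than `n²` whenever `m = O(n)`. -/
theorem hybrid_join_asymptotic_improvement {Row : Type*} :
    -- the Cartesian join compares every (left, right) pair of rows
    (∀ L R : List Row, (L.product R).length = L.length * R.length) ∧
    (∀ L : List Row, (L.product L).length = L.length ^ 2) ∧
    -- if m ≤ c·n, then (n+m)·log(n+m) / n² → 0 as n → ∞
    (∀ c : ℝ, 0 < c → ∀ m : ℕ → ℕ, (∀ n, (m n : ℝ) ≤ c * n) →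
      Filter.Tendsto
        (fun n : ℕ =>
          ((n : ℝ) + m n) * Real.log ((n : ℝ) + m n) / (n : ℝ) ^ 2)
        Filter.atTop (nhds 0)) := by
  refine ⟨fun L R => List.length_product L R, fun L => by
    rw [sq]; exact List.length_product L L, fun c hc m hm => ?_⟩
  -- upper bound function
  have hlog : Filter.Tendsto (fun x : ℝ => Real.log x / x) Filter.atTop (nhds 0) :=
    Real.isLittleO_log_id_atTop.tendsto_div_nhds_zero
  have hcomp : Filter.Tendsto (fun n : ℕ => (1 + c) * (n : ℝ)) Filter.atTop Filter.atTop :=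
    (Filter.tendsto_const_mul_atTop_of_pos (by linarith)).2 tendsto_natCast_atTop_atTop
  have hg : Filter.Tendsto
      (fun n : ℕ => (1 + c) ^ 2 * (Real.log ((1 + c) * n) / ((1 + c) * n)))
      Filter.atTop (nhds 0) := by
    have := (hlog.comp hcomp).const_mul ((1 + c) ^ 2)
    simpa using this
  refine squeeze_zero' ?_ ?_ hg
  · filter_upwards [Filter.eventually_ge_atTop 1] with n hn
    have hn1 : (1 : ℝ) ≤ (n : ℝ) := by exact_mod_cast hn
    have hx : (1 : ℝ) ≤ (n : ℝ) + m n := by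
      have := Nat.cast_nonneg (α := ℝ) (m n); linarith
    exact div_nonneg (mul_nonneg (by linarith) (Real.log_nonneg hx)) (by positivity)
  · filter_upwards [Filter.eventually_ge_atTop 1] with n hn
    have hn1 : (1 : ℝ) ≤ (n : ℝ) := by exact_mod_cast hn
    have hn0 : (0 : ℝ) < n := by linarith
    have hm0 : (0 : ℝ) ≤ m n := Nat.cast_nonneg _
    have hx1 : (1 : ℝ) ≤ (n : ℝ) + m n := by linarith
    have hle : (n : ℝ) + m n ≤ (1 + c) * n := by have := hm n; linarith
    have hlogle : Real.log ((n : ℝ) + m n) ≤ Real.log ((1 + c) * n) :=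
      Real.log_le_log (by linarith) hle
    have hlognn : 0 ≤ Real.log ((n : ℝ) + m n) := Real.log_nonneg hx1
    have hnum : ((n : ℝ) + m n) * Real.log ((n : ℝ) + m n)
        ≤ ((1 + c) * n) * Real.log ((1 + c) * n) := by
      have hlog2 : 0 ≤ Real.log ((1 + c) * n) := hlognn.trans hlogle
      nlinarith
    have hrw : (1 + c) ^ 2 * (Real.log ((1 + c) * n) / ((1 + c) * n))
        = ((1 + c) * n) * Real.log ((1 + c) * n) / (n : ℝ) ^ 2 := by
      field_simp
    rw [hrw]
    gcongr
end

section
/- The hybrid aggregation equality-flag accumulation is correct: given a list of key-value pairs sorted by key, define a scan that at each position i > 0 adds the accumulated value at i−1 to the value at i whenever key(i) = key(i−1); then for each key k, the entry at the last position of k's contiguous block holds the sum of all values with key k, and discarding all positions i for which key(i+1) = key(i) (i.e., keeping exactly positions where the next key differs or which are last) yields exactly one pair (k, total_k) per distinct key. -/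
/-- The left scan of the hybrid aggregation: `scanAcc 0 = vals 0`, and
`scanAcc (i+1) = vals (i+1) + scanAcc i` when the equality flag is set
(`keys (i+1) = keys i`), else `vals (i+1)`. -/
def scanAcc {K M : Type*} [DecidableEq K] [AddCommMonoid M]
    (keys : ℕ → K) (vals : ℕ → M) : ℕ → M
  | 0 => vals 0
  | (i + 1) =>
      vals (i + 1) + (if keys (i + 1) = keys i then scanAcc keys vals i else 0)

/-- Correctness of the hybrid aggregation's equality-flag accumulation: for a
length-`n` input sorted so that equal keys are contiguous, the entry at the
last position of each key's block accumulates the total of that key, and the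
kept positions (those whose successor has a different key, or the last
position) contain exactly one `(k, total_k)` per distinct key. -/
theorem hybrid_aggregation_scan_correct {K M : Type*} [DecidableEq K]
    [AddCommMonoid M] (n : ℕ) (keys : ℕ → K) (vals : ℕ → M)
    (hsorted : ∀ i j k, i ≤ j → j ≤ k → k < n → keys i = keys k →
      keys i = keys j) :
    let kept := (Finset.range n).filter
      (fun i => i + 1 = n ∨ keys (i + 1) ≠ keys i)
    -- each kept position holds the total for its key
    (∀ i ∈ kept, scanAcc keys vals i =
      ∑ j ∈ (Finset.range n).filter (fun j => keys j = keys i), vals j) ∧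
    -- exactly one kept position per distinct key occurring in the input
    Set.InjOn keys kept ∧ kept.image keys = (Finset.range n).image keys := by
  intro kept
  have hmem : ∀ i, i ∈ kept ↔ i < n ∧ (i + 1 = n ∨ keys (i + 1) ≠ keys i) := by
    intro i; simp [kept, Finset.mem_filter, Finset.mem_range]
  -- no later position (within range) shares the key of a kept position
  have hlater : ∀ i, i ∈ kept → ∀ j, i < j → j < n → keys j ≠ keys i := by
    intro i hi j hij hj hkey
    rw [hmem] at hi
    rcases hi.2 with h | h
    · omega
    · exact h (hsorted i (i + 1) j (by omega) (by omega) hj hkey.symm).symm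
  -- the scan at position i sums the block of keys i ending at i
  have hA : ∀ i, i < n → scanAcc keys vals i =
      ∑ j ∈ (Finset.range (i + 1)).filter (fun j => keys j = keys i), vals j := by
    intro i
    induction i with
    | zero => intro _; simp [scanAcc, Finset.filter_singleton]
    | succ i ih =>
      intro hn
      have hstep : ∑ j ∈ (Finset.range (i + 2)).filter
            (fun j => keys j = keys (i + 1)), vals j
          = vals (i + 1) +
            ∑ j ∈ (Finset.range (i + 1)).filter (fun j => keys j = keys (i + 1)), vals j := by
        rw [show i + 2 = (i + 1) + 1 from rfl, Finset.range_add_one, Finset.filter_insert]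
        rw [if_pos rfl, Finset.sum_insert (by simp)]
      by_cases hE : keys (i + 1) = keys i
      · rw [show i + 1 + 1 = i + 2 from rfl, hstep, hE]
        simp only [scanAcc, if_pos hE, ih (by omega)]
      · have hzero : ∑ j ∈ (Finset.range (i + 1)).filter
            (fun j => keys j = keys (i + 1)), vals j = 0 := by
          apply Finset.sum_eq_zero
          intro j hj
          exfalso
          simp only [Finset.mem_filter, Finset.mem_range] at hj
          have hji : keys j = keys i :=
            hsorted j i (i + 1) (by omega) (by omega) hn hj.2
          exact hE (hj.2.symm.trans hji)
        rw [show i + 1 + 1 = i + 2 from rfl, hstep, hzero, add_zero]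
        simp [scanAcc, if_neg hE]
  have hsum : ∀ i ∈ kept, scanAcc keys vals i =
      ∑ j ∈ (Finset.range n).filter (fun j => keys j = keys i), vals j := by
    intro i hi
    have hin : i < n := ((hmem i).1 hi).1
    rw [hA i hin]
    congr 1
    apply Finset.Subset.antisymm
    · intro j hj
      simp only [Finset.mem_filter, Finset.mem_range] at hj ⊢
      exact ⟨by omega, hj.2⟩
    · intro j hj
      simp only [Finset.mem_filter, Finset.mem_range] at hj ⊢
      refine ⟨?_, hj.2⟩
      by_contra hlt
      exact hlater i hi j (by omega) hj.1 hj.2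
  refine ⟨hsum, ?_, ?_⟩
  · intro i hi i' hi' h
    rw [Finset.mem_coe] at hi hi'
    by_contra hne
    rcases Nat.lt_or_ge i i' with hlt | hge
    · exact hlater i hi i' hlt ((hmem i').1 hi').1 h.symm
    · exact hlater i' hi' i (by omega) ((hmem i).1 hi).1 h
  · apply Finset.Subset.antisymm
    · exact Finset.image_subset_image (Finset.filter_subset _ _)
    · intro k hk
      simp only [Finset.mem_image, Finset.mem_range] at hk ⊢
      obtain ⟨j, hj, hkj⟩ := hk
      set S := (Finset.range n).filter (fun l => keys l = keys j) with hS
      have hjS : j ∈ S := by simp [hS, hj]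
      have hne : S.Nonempty := ⟨j, hjS⟩
      set i := S.max' hne with hi
      have hiS : i ∈ S := S.max'_mem hne
      simp only [hS, Finset.mem_filter, Finset.mem_range] at hiS
      have hikept : i ∈ kept := by
        rw [hmem]
        refine ⟨hiS.1, ?_⟩
        by_cases hend : i + 1 = n
        · exact Or.inl hend
        · refine Or.inr fun hcon => ?_
          have : i + 1 ∈ S := by
            simp only [hS, Finset.mem_filter, Finset.mem_range]
            exact ⟨by omega, hcon.trans hiS.2⟩
          have := S.le_max' _ this
          omega
      exact ⟨i, hikept, hiS.2.trans hkj⟩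
end
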